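/- With the same setup as the interval observer for discrete-time LTI systems, defining x̄_k = (T^{-1})⊕ z̄_k − (T^{-1})⊖ z̲_k and x̲_k = (T^{-1})⊕ z̲_k − (T^{-1})⊖ z̄_k, one has x̲_k ≤ x_k ≤ x̄_k componentwise for all k ∈ ℕ. -/

import Mathlib

/-!
Since `T F = A T + B H`, the transformed state `s_k = T x_k` obeys
`s_{k+1} = A s_k + B y_k + T u_k + (T D) d_k - (B W) w_k`, the unknown `H x_k` being replaced
by `y_k - W w_k`. A nonnegative matrix preserves the order, and `M = M⁺ - M⁻` maps the box
`[a, b]` into the box `[M⁺ a - M⁻ b, M⁺ b - M⁻ a]`. Hence `z̲_k ≤ T x_k ≤ z̄_k` by induction,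
and applying the box bound to `T⁻¹` gives the bounds on `x_k`.
-/

open Matrix

def matPos {m n : ℕ} (A : Matrix (Fin m) (Fin n) ℝ) : Matrix (Fin m) (Fin n) ℝ :=
  fun i j => max 0 (A i j)

def matNeg {m n : ℕ} (A : Matrix (Fin m) (Fin n) ℝ) : Matrix (Fin m) (Fin n) ℝ :=
  matPos A - A

theorem Matrix.mulVec_mono_of_nonneg {m n R : Type*} [Fintype n] [Semiring R]
    [PartialOrder R] [IsOrderedRing R] {M : Matrix m n R} (hM : ∀ i j, 0 ≤ M i j)
    {a b : n → R} (hab : a ≤ b) :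
    M *ᵥ a ≤ M *ᵥ b := fun i =>
  Finset.sum_le_sum fun j _ => mul_le_mul_of_nonneg_left (hab j) (hM i j)

section BoxBounds

variable {m n : ℕ} (M : Matrix (Fin m) (Fin n) ℝ)

lemma matPos_nonneg (i j) : 0 ≤ matPos M i j :=
  le_max_left _ _

lemma matNeg_nonneg (i j) : 0 ≤ matNeg M i j := by
  simp [matNeg, matPos]

lemma matPos_mulVec_sub_matNeg_mulVec (v : Fin n → ℝ) :
    matPos M *ᵥ v - matNeg M *ᵥ v = M *ᵥ v := by
  rw [← sub_mulVec, matNeg, sub_sub_cancel]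

variable {M} {a v b : Fin n → ℝ}

lemma mulVec_le_of_le_of_le (ha : a ≤ v) (hb : v ≤ b) :
    M *ᵥ v ≤ matPos M *ᵥ b - matNeg M *ᵥ a := by
  rw [← matPos_mulVec_sub_matNeg_mulVec M v]
  exact sub_le_sub (mulVec_mono_of_nonneg (matPos_nonneg M) hb)
    (mulVec_mono_of_nonneg (matNeg_nonneg M) ha)

lemma le_mulVec_of_le_of_le (ha : a ≤ v) (hb : v ≤ b) :
    matPos M *ᵥ a - matNeg M *ᵥ b ≤ M *ᵥ v := by
  rw [← matPos_mulVec_sub_matNeg_mulVec M v]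
  exact sub_le_sub (mulVec_mono_of_nonneg (matPos_nonneg M) ha)
    (mulVec_mono_of_nonneg (matNeg_nonneg M) hb)

lemma neg_mulVec_le_of_le_of_le (ha : a ≤ v) (hb : v ≤ b) :
    -(M *ᵥ v) ≤ matNeg M *ᵥ b - matPos M *ᵥ a := by
  rw [← matPos_mulVec_sub_matNeg_mulVec M v, neg_sub]
  exact sub_le_sub (mulVec_mono_of_nonneg (matNeg_nonneg M) hb)
    (mulVec_mono_of_nonneg (matPos_nonneg M) ha)

lemma le_neg_mulVec_of_le_of_le (ha : a ≤ v) (hb : v ≤ b) :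
    matNeg M *ᵥ a - matPos M *ᵥ b ≤ -(M *ᵥ v) := by
  rw [← matPos_mulVec_sub_matNeg_mulVec M v, neg_sub]
  exact sub_le_sub (mulVec_mono_of_nonneg (matNeg_nonneg M) ha)
    (mulVec_mono_of_nonneg (matPos_nonneg M) hb)

end BoxBounds

theorem transformed_state_step {n p q r R : Type*} [Fintype n] [Fintype p] [Fintype q]
    [Fintype r] [CommRing R] {F A T : Matrix n n R} {H : Matrix p n R} {D : Matrix n q R}
    {W : Matrix p r R} {B : Matrix n p R} (hSyl : T * F = A * T + B * H)
    {x u : n → R} {d : q → R} {w : r → R} :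
    T *ᵥ (F *ᵥ x + u + D *ᵥ d) =
      A *ᵥ (T *ᵥ x) + B *ᵥ (H *ᵥ x + W *ᵥ w) + T *ᵥ u + (T * D) *ᵥ d - (B * W) *ᵥ w := by
  simp only [mulVec_add, mulVec_mulVec, hSyl, add_mulVec]
  abel

section ObserverStep

variable {n q r : ℕ} {A : Matrix (Fin n) (Fin n) ℝ} {E : Matrix (Fin n) (Fin q) ℝ}
  {G : Matrix (Fin n) (Fin r) ℝ} {s lo hi b c : Fin n → ℝ} {d dlo dhi : Fin q → ℝ}
  {w wlo whi : Fin r → ℝ}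

lemma observer_step_le (hA : ∀ i j, 0 ≤ A i j) (hs : s ≤ hi) (hd : dlo ≤ d ∧ d ≤ dhi)
    (hw : wlo ≤ w ∧ w ≤ whi) :
    A *ᵥ s + b + c + E *ᵥ d - G *ᵥ w ≤
      A *ᵥ hi + b + c + matPos E *ᵥ dhi - matNeg E *ᵥ dlo + matNeg G *ᵥ whi - matPos G *ᵥ wlo := by
  have hE := mulVec_le_of_le_of_le (M := E) hd.1 hd.2
  have hG := neg_mulVec_le_of_le_of_le (M := G) hw.1 hw.2
  have hAs := mulVec_mono_of_nonneg hA hs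
  calc _ = A *ᵥ s + b + c + E *ᵥ d + -(G *ᵥ w) := sub_eq_add_neg _ _
    _ ≤ A *ᵥ hi + b + c + (matPos E *ᵥ dhi - matNeg E *ᵥ dlo)
          + (matNeg G *ᵥ whi - matPos G *ᵥ wlo) := by gcongr
    _ = _ := by abel

lemma le_observer_step (hA : ∀ i j, 0 ≤ A i j) (hs : lo ≤ s) (hd : dlo ≤ d ∧ d ≤ dhi)
    (hw : wlo ≤ w ∧ w ≤ whi) :
    A *ᵥ lo + b + c + matPos E *ᵥ dlo - matNeg E *ᵥ dhi + matNeg G *ᵥ wlo - matPos G *ᵥ whi ≤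
      A *ᵥ s + b + c + E *ᵥ d - G *ᵥ w := by
  have hE := le_mulVec_of_le_of_le (M := E) hd.1 hd.2
  have hG := le_neg_mulVec_of_le_of_le (M := G) hw.1 hw.2
  have hAs := mulVec_mono_of_nonneg hA hs
  calc _ = A *ᵥ lo + b + c + (matPos E *ᵥ dlo - matNeg E *ᵥ dhi)
          + (matNeg G *ᵥ wlo - matPos G *ᵥ whi) := by abel
    _ ≤ A *ᵥ s + b + c + E *ᵥ d + -(G *ᵥ w) := by gcongr
    _ = _ := (sub_eq_add_neg _ _).symm

end ObserverStep

theorem interval_observer_soundness_x {n p q r : ℕ}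
    (F A T : Matrix (Fin n) (Fin n) ℝ) (H : Matrix (Fin p) (Fin n) ℝ)
    (D : Matrix (Fin n) (Fin q) ℝ) (W : Matrix (Fin p) (Fin r) ℝ)
    (B : Matrix (Fin n) (Fin p) ℝ)
    (hA : ∀ i j, 0 ≤ A i j) (hTinv : IsUnit T.det)
    (hSyl : T * F = A * T + B * H)
    (x u : ℕ → Fin n → ℝ) (y : ℕ → Fin p → ℝ)
    (d dbar dlow : ℕ → Fin q → ℝ) (w wbar wlow : ℕ → Fin r → ℝ)
    (zbar zlow : ℕ → Fin n → ℝ) (xbar0 xlow0 : Fin n → ℝ)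
    (hx : ∀ k, x (k + 1) = F.mulVec (x k) + u k + D.mulVec (d k))
    (hy : ∀ k, y k = H.mulVec (x k) + W.mulVec (w k))
    (hd : ∀ k, dlow k ≤ d k ∧ d k ≤ dbar k)
    (hw : ∀ k, wlow k ≤ w k ∧ w k ≤ wbar k)
    (hx0 : xlow0 ≤ x 0 ∧ x 0 ≤ xbar0)
    (hz0 : zbar 0 = (matPos T).mulVec xbar0 - (matNeg T).mulVec xlow0 ∧
           zlow 0 = (matPos T).mulVec xlow0 - (matNeg T).mulVec xbar0)
    (hzbar : ∀ k, zbar (k + 1) = A.mulVec (zbar k) + B.mulVec (y k) + T.mulVec (u k)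
      + (matPos (T * D)).mulVec (dbar k) - (matNeg (T * D)).mulVec (dlow k)
      + (matNeg (B * W)).mulVec (wbar k) - (matPos (B * W)).mulVec (wlow k))
    (hzlow : ∀ k, zlow (k + 1) = A.mulVec (zlow k) + B.mulVec (y k) + T.mulVec (u k)
      + (matPos (T * D)).mulVec (dlow k) - (matNeg (T * D)).mulVec (dbar k)
      + (matNeg (B * W)).mulVec (wlow k) - (matPos (B * W)).mulVec (wbar k)) :
    ∀ k, (matPos T⁻¹).mulVec (zlow k) - (matNeg T⁻¹).mulVec (zbar k) ≤ x k ∧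
      x k ≤ (matPos T⁻¹).mulVec (zbar k) - (matNeg T⁻¹).mulVec (zlow k) := by
  have hz : ∀ k, zlow k ≤ T *ᵥ x k ∧ T *ᵥ x k ≤ zbar k := by
    intro k
    induction k with
    | zero =>
      rw [hz0.1, hz0.2]
      exact ⟨le_mulVec_of_le_of_le hx0.1 hx0.2, mulVec_le_of_le_of_le hx0.1 hx0.2⟩
    | succ k ih =>
      rw [hzlow k, hzbar k, hx k, transformed_state_step (W := W) (w := w k) hSyl, ← hy k]
      exact ⟨le_observer_step hA ih.1 (hd k) (hw k), observer_step_le hA ih.2 (hd k) (hw k)⟩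
  intro k
  have hx_eq : T⁻¹ *ᵥ (T *ᵥ x k) = x k := by
    rw [mulVec_mulVec, nonsing_inv_mul T hTinv, one_mulVec]
  rw [← hx_eq]
  exact ⟨le_mulVec_of_le_of_le (hz k).1 (hz k).2, mulVec_le_of_le_of_le (hz k).1 (hz k).2⟩
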